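/- If the Collatz conjecture holds in the form 'every positive integer is E_{3,2}-equivalent to 1', then both quotient groups H_{3,2} and H_{3,8} are trivial. -/

import Mathlib

abbrev G : Type := {x : ℚ // 0 < x}

def toG (c : ℕ+) : G := ⟨(c : ℚ), by exact_mod_cast c.pos⟩

def Cmap (p q : ℕ+) (c : ℕ+) : ℕ+ :=
  if h : (q : ℕ) ∣ (c : ℕ) then
    ⟨(c : ℕ) / (q : ℕ), Nat.div_pos (Nat.le_of_dvd c.pos h) q.pos⟩
  else p * c + 1

def E (p q : ℕ+) : ℕ+ → ℕ+ → Prop := Relation.EqvGen (fun c d => d = Cmap p q c)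

def Npq (p q : ℕ+) : Subgroup G :=
  Subgroup.closure ({toG q} ∪ {x : G | ∃ c d : ℕ+, E p q c d ∧ x = toG c / toG d})

/-!
Every positive rational is a quotient `a / b` of positive integers, and `a / b ∈ N_{3,2}` as soon
as `a` and `b` are both `E_{3,2}`-equivalent to `1`; so the Collatz conjecture makes `N_{3,2}` the
whole group. Moreover `N_{3,2} ≤ N_{3,8}`: a Collatz step `2d ↦ d` contributes the ratio `2 = 8 / 4`,
which lies in `N_{3,8}` because `C_{3,8}` sends `1` to `4`, and on integers not divisible by `2`
(hence not by `8`) the maps `C_{3,2}` and `C_{3,8}` agree.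
-/

@[simp]
lemma toG_one : toG 1 = 1 :=
  Subtype.ext (by simp [toG])

@[simp]
lemma toG_mul (a b : ℕ+) : toG (a * b) = toG a * toG b :=
  Subtype.ext (by simp [toG])

lemma exists_eq_toG_div_toG (x : G) : ∃ a b : ℕ+, x = toG a / toG b := by
  have hnum : 0 < x.val.num := Rat.num_pos.mpr x.2
  refine ⟨⟨x.val.num.toNat, by omega⟩, ⟨x.val.den, x.val.pos⟩, Subtype.ext ?_⟩
  show x.val = ((x.val.num.toNat : ℕ) : ℚ) / ((x.val.den : ℕ) : ℚ)
  rw [show ((x.val.num.toNat : ℕ) : ℚ) = x.val.num by exact_mod_cast Int.toNat_of_nonneg hnum.le]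
  exact (Rat.num_div_den x.val).symm

lemma Cmap_of_dvd {p q c : ℕ+} (h : (q : ℕ) ∣ (c : ℕ)) : c = q * Cmap p q c := by
  apply PNat.coe_injective
  have hC : (Cmap p q c : ℕ) = c / q := by simp [Cmap, h]
  rw [PNat.mul_coe, hC, Nat.mul_div_cancel' h]

lemma Cmap_of_not_dvd {p q c : ℕ+} (h : ¬ (q : ℕ) ∣ (c : ℕ)) : Cmap p q c = p * c + 1 := by
  simp [Cmap, h]

lemma Relation.EqvGen.div_mem {α M : Type*} [Group M] {r : α → α → Prop} {f : α → M}
    {N : Subgroup M} (hr : ∀ a b, r a b → f a / f b ∈ N) {a b : α}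
    (hab : Relation.EqvGen r a b) : f a / f b ∈ N := by
  induction hab with
  | rel a b h => exact hr a b h
  | refl a => simp
  | symm a b _ ih => simpa using inv_mem ih
  | trans a b c _ _ ih₁ ih₂ => simpa using mul_mem ih₁ ih₂

lemma toG_div_toG_mem_Npq {p q c d : ℕ+} (h : E p q c d) : toG c / toG d ∈ Npq p q :=
  Subgroup.subset_closure (Or.inr ⟨c, d, h, rfl⟩)

lemma toG_mem_Npq {p q c : ℕ+} (h : E p q c 1) : toG c ∈ Npq p q := by
  simpa using toG_div_toG_mem_Npq h

lemma toG_Cmap_one_mem_Npq (p q : ℕ+) : toG (Cmap p q 1) ∈ Npq p q := by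
  simpa using inv_mem (toG_div_toG_mem_Npq (Relation.EqvGen.rel 1 (Cmap p q 1) rfl : E p q 1 _))

lemma Npq_eq_top {p q : ℕ+} (h : ∀ c, E p q c 1) : Npq p q = ⊤ := by
  refine eq_top_iff.mpr fun x _ => ?_
  obtain ⟨a, b, rfl⟩ := exists_eq_toG_div_toG x
  exact div_mem (toG_mem_Npq (h a)) (toG_mem_Npq (h b))

lemma Npq_le_Npq_of_dvd {p q Q : ℕ+} (hqQ : (q : ℕ) ∣ (Q : ℕ)) (hq : toG q ∈ Npq p Q) :
    Npq p q ≤ Npq p Q := by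
  refine (Subgroup.closure_le _).mpr ?_
  rintro x (rfl | ⟨c, d, hcd, rfl⟩)
  · exact hq
  refine Relation.EqvGen.div_mem (fun c d hd => ?_) hcd
  subst hd
  by_cases hc : (q : ℕ) ∣ (c : ℕ)
  · nth_rewrite 1 [Cmap_of_dvd (p := p) hc]
    simpa using hq
  · have hcd : Cmap p Q c = Cmap p q c := by
      rw [Cmap_of_not_dvd hc, Cmap_of_not_dvd fun hQ => hc (hqQ.trans hQ)]
    rw [← hcd]
    exact toG_div_toG_mem_Npq (Relation.EqvGen.rel _ _ rfl)

lemma toG_two_mem_Npq_three_eight : toG 2 ∈ Npq 3 8 := by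
  have h8 : toG 8 ∈ Npq 3 8 := Subgroup.subset_closure (Or.inl rfl)
  have h4 : toG 4 ∈ Npq 3 8 := toG_Cmap_one_mem_Npq 3 8
  simpa [show (8 : ℕ+) = 2 * 4 from rfl] using div_mem h8 h4

theorem stmt17 (h : ∀ c : ℕ+, E 3 2 c 1) :
    Subsingleton (G ⧸ Npq 3 2) ∧ Subsingleton (G ⧸ Npq 3 8) := by
  have h32 : Npq 3 2 = ⊤ := Npq_eq_top h
  have h38 : Npq 3 8 = ⊤ :=
    eq_top_iff.mpr (h32 ▸ Npq_le_Npq_of_dvd (by norm_num) toG_two_mem_Npq_three_eight)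
  rw [h32, h38]
  exact ⟨QuotientGroup.subsingleton_quotient_top, QuotientGroup.subsingleton_quotient_top⟩
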